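/- There exists C > 0 such that for all z, w in the open unit ball of ℂⁿ, |z - w| ≤ C |φ_z(w)| · |1-⟨z,w⟩|^{1/2}. -/

import Mathlib

open MeasureTheory

variable {n : ℕ}

/-- The Hermitian inner product `⟨z,w⟩ = Σᵢ zᵢ ·conj wᵢ` (linear in the first slot). -/
noncomputable def hin (z w : EuclideanSpace ℂ (Fin n)) : ℂ :=
  ∑ i, z i * (starRingEnd ℂ) (w i)

/-- Orthogonal projection of `w` onto the complex line `ℂz`. -/
noncomputable def Pz (z w : EuclideanSpace ℂ (Fin n)) : EuclideanSpace ℂ (Fin n) :=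
  (hin w z / hin z z) • z

/-- Orthogonal projection of `w` onto the orthogonal complement of `ℂz`. -/
noncomputable def Qz (z w : EuclideanSpace ℂ (Fin n)) : EuclideanSpace ℂ (Fin n) :=
  w - Pz z w

open Classical in
/-- The Möbius transform `φ_z` of the unit ball of `ℂⁿ`. -/
noncomputable def mobius (z w : EuclideanSpace ℂ (Fin n)) : EuclideanSpace ℂ (Fin n) :=
  if z = 0 then -w
  else (1 - hin w z)⁻¹ • (z - Pz z w - (Real.sqrt (1 - ‖z‖ ^ 2) : ℂ) • Qz z w)

/-! With `a = ⟪z, w⟫_ℂ` (the paper's `⟨w, z⟩`), `c = ‖1 - a‖`, `s = 1 - ‖z‖²`, `t = 1 - ‖w‖²`,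
orthogonality of `z - P_z w` and `Q_z w` gives Rudin's identity `c² ‖φ_z w‖² = c² - s t`.
Since `‖z - w‖² = 2 Re (1 - a) - s - t ≤ 2c - s - t` and `(s + t) c ≥ 2 √(st) · √(st) = 2 s t`,
we get `‖z - w‖² c ≤ 2 (c² - s t) = 2 c² ‖φ_z w‖²`, i.e. the claim with `C = √2`. -/

open scoped InnerProductSpace

lemma hin_eq_inner (z w : EuclideanSpace ℂ (Fin n)) : hin z w = ⟪w, z⟫_ℂ := by
  simp [hin, PiLp.inner_apply, RCLike.inner_apply]

lemma norm_one_sub_hin_comm (z w : EuclideanSpace ℂ (Fin n)) :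
    ‖1 - hin z w‖ = ‖1 - hin w z‖ := by
  rw [hin_eq_inner, hin_eq_inner, ← inner_conj_symm, ← Complex.norm_conj, map_sub, map_one,
    Complex.conj_conj]

lemma coe_norm_sq_eq_inner_self (z : EuclideanSpace ℂ (Fin n)) :
    ((‖z‖ ^ 2 : ℝ) : ℂ) = ⟪z, z⟫_ℂ := by
  rw [inner_self_eq_norm_sq_to_K]
  norm_cast

lemma Pz_eq_smul (z w : EuclideanSpace ℂ (Fin n)) :
    Pz z w = (⟪z, w⟫_ℂ / ((‖z‖ ^ 2 : ℝ) : ℂ)) • z := by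
  rw [Pz, hin_eq_inner, hin_eq_inner, coe_norm_sq_eq_inner_self]

lemma sub_Pz_eq_smul (z w : EuclideanSpace ℂ (Fin n)) :
    z - Pz z w = (1 - ⟪z, w⟫_ℂ / ((‖z‖ ^ 2 : ℝ) : ℂ)) • z := by
  rw [Pz_eq_smul, sub_smul, one_smul]

lemma inner_Qz_right (z w : EuclideanSpace ℂ (Fin n)) : ⟪z, Qz z w⟫_ℂ = 0 := by
  rcases eq_or_ne z 0 with rfl | hz
  · simp
  rw [Qz, inner_sub_right, Pz_eq_smul, inner_smul_right, coe_norm_sq_eq_inner_self,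
    div_mul_cancel₀ _ (inner_self_ne_zero.mpr hz), sub_self]

lemma norm_Qz_sq {z : EuclideanSpace ℂ (Fin n)} (hz : z ≠ 0) (w : EuclideanSpace ℂ (Fin n)) :
    ‖Qz z w‖ ^ 2 = ‖w‖ ^ 2 - ‖⟪z, w⟫_ℂ‖ ^ 2 / ‖z‖ ^ 2 := by
  have hPQ : ⟪Pz z w, Qz z w⟫_ℂ = 0 := by
    rw [Pz_eq_smul, inner_smul_left, inner_Qz_right, mul_zero]
  have hP : ‖Pz z w‖ ^ 2 = ‖⟪z, w⟫_ℂ‖ ^ 2 / ‖z‖ ^ 2 := by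
    have : ‖z‖ ≠ 0 := norm_ne_zero_iff.mpr hz
    rw [Pz_eq_smul, norm_smul, norm_div, Complex.norm_real, Real.norm_of_nonneg (by positivity)]
    field_simp
  have := norm_add_sq (𝕜 := ℂ) (Pz z w) (Qz z w)
  rw [hPQ, map_zero, mul_zero, add_zero, hP, Qz, add_sub_cancel] at this
  rw [Qz]
  linarith

lemma norm_one_sub_div_sq_mul_add (a : ℂ) {r : ℝ} (hr : r ≠ 0) (x : ℝ) :
    ‖1 - a / r‖ ^ 2 * r + (1 - r) * (x - ‖a‖ ^ 2 / r) = ‖1 - a‖ ^ 2 - (1 - r) * (1 - x) := by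
  have hr' : (r : ℂ) ≠ 0 := by exact_mod_cast hr
  have : (1 : ℂ) - a / r = (r - a) / r := by field_simp
  rw [this, norm_div, Complex.norm_real, div_pow, Real.norm_eq_abs, sq_abs]
  simp only [Complex.sq_norm, Complex.normSq_apply, Complex.sub_re, Complex.sub_im,
    Complex.ofReal_re, Complex.ofReal_im, Complex.one_re, Complex.one_im]
  field_simp
  ring

lemma norm_mobius_numerator_sq {z : EuclideanSpace ℂ (Fin n)} (hz : z ≠ 0) (hz1 : ‖z‖ ≤ 1)
    (w : EuclideanSpace ℂ (Fin n)) :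
    ‖z - Pz z w - (√(1 - ‖z‖ ^ 2) : ℂ) • Qz z w‖ ^ 2
      = ‖1 - ⟪z, w⟫_ℂ‖ ^ 2 - (1 - ‖z‖ ^ 2) * (1 - ‖w‖ ^ 2) := by
  have horth : ⟪z - Pz z w, (√(1 - ‖z‖ ^ 2) : ℂ) • Qz z w⟫_ℂ = 0 := by
    rw [sub_Pz_eq_smul, inner_smul_left, inner_smul_right, inner_Qz_right, mul_zero, mul_zero]
  rw [norm_sub_sq (𝕜 := ℂ), horth, map_zero, mul_zero, sub_zero, sub_Pz_eq_smul, norm_smul,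
    norm_smul, mul_pow, mul_pow, Complex.norm_real, Real.norm_of_nonneg (Real.sqrt_nonneg _),
    Real.sq_sqrt (by nlinarith [norm_nonneg z]), norm_Qz_sq hz]
  exact norm_one_sub_div_sq_mul_add _ (by positivity) _

lemma norm_mobius_sq_mul {z w : EuclideanSpace ℂ (Fin n)} (hz : ‖z‖ ≤ 1) (hzw : ⟪z, w⟫_ℂ ≠ 1) :
    ‖mobius z w‖ ^ 2 * ‖1 - ⟪z, w⟫_ℂ‖ ^ 2
      = ‖1 - ⟪z, w⟫_ℂ‖ ^ 2 - (1 - ‖z‖ ^ 2) * (1 - ‖w‖ ^ 2) := by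
  rcases eq_or_ne z 0 with rfl | hz0
  · simp [mobius]
  have hc : ‖1 - ⟪z, w⟫_ℂ‖ ≠ 0 := norm_ne_zero_iff.mpr (sub_ne_zero.mpr hzw.symm)
  rw [mobius, if_neg hz0, hin_eq_inner, norm_smul, norm_inv, mul_pow,
    norm_mobius_numerator_sq hz0 hz]
  field_simp

lemma inner_ne_one_of_norm_le_of_norm_lt {z w : EuclideanSpace ℂ (Fin n)} (hz : ‖z‖ ≤ 1)
    (hw : ‖w‖ < 1) : ⟪z, w⟫_ℂ ≠ 1 := by
  intro h
  have := norm_inner_le_norm (𝕜 := ℂ) z w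
  rw [h, norm_one] at this
  nlinarith [norm_nonneg w]

lemma sub_mul_le_two_mul_sq_sub_mul {c u s t : ℝ} (hs : 0 ≤ s) (ht : 0 ≤ t) (hc : 0 ≤ c)
    (hst : s * t ≤ c ^ 2) (hu : u ≤ c) :
    (2 * u - s - t) * c ≤ 2 * (c ^ 2 - s * t) := by
  have : 2 * (s * t) ≤ (s + t) * c := by
    nlinarith [sq_nonneg (s - t), mul_nonneg hs ht, mul_nonneg (add_nonneg hs ht) hc]
  nlinarith

lemma norm_sub_sq_le_two_mul_norm_mobius_sq {z w : EuclideanSpace ℂ (Fin n)} (hz : ‖z‖ ≤ 1)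
    (hw : ‖w‖ ≤ 1) (hzw : ⟪z, w⟫_ℂ ≠ 1) :
    ‖z - w‖ ^ 2 ≤ 2 * ‖mobius z w‖ ^ 2 * ‖1 - ⟪z, w⟫_ℂ‖ := by
  have hmob := norm_mobius_sq_mul hz hzw
  have hdist : ‖z - w‖ ^ 2 = 2 * (1 - ⟪z, w⟫_ℂ).re - (1 - ‖z‖ ^ 2) - (1 - ‖w‖ ^ 2) := by
    rw [norm_sub_sq (𝕜 := ℂ), Complex.sub_re, Complex.one_re, RCLike.re_to_complex]
    ring
  set c := ‖1 - ⟪z, w⟫_ℂ‖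
  have hc : 0 < c := norm_pos_iff.mpr (sub_ne_zero.mpr hzw.symm)
  have key := sub_mul_le_two_mul_sq_sub_mul (s := 1 - ‖z‖ ^ 2) (t := 1 - ‖w‖ ^ 2)
    (u := (1 - ⟪z, w⟫_ℂ).re) (by nlinarith [norm_nonneg z]) (by nlinarith [norm_nonneg w]) hc.le
    (by rw [← sub_nonneg, ← hmob]; positivity) (Complex.re_le_norm _)
  rw [← hdist, ← hmob] at key
  exact le_of_mul_le_mul_right (by linarith) hc

theorem stmt_8 (n : ℕ) :
    ∃ C : ℝ, 0 < C ∧ ∀ z w : EuclideanSpace ℂ (Fin n), ‖z‖ < 1 → ‖w‖ < 1 →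
      ‖z - w‖ ≤ C * ‖mobius z w‖ * Real.sqrt ‖1 - hin z w‖ := by
  refine ⟨√2, by positivity, fun z w hz hw => ?_⟩
  have hsq := norm_sub_sq_le_two_mul_norm_mobius_sq hz.le hw.le
    (inner_ne_one_of_norm_le_of_norm_lt hz.le hw)
  rw [norm_one_sub_hin_comm, hin_eq_inner]
  refine (pow_le_pow_iff_left₀ (norm_nonneg _) (by positivity) two_ne_zero).mp ?_
  rwa [mul_pow, mul_pow, Real.sq_sqrt zero_le_two, Real.sq_sqrt (norm_nonneg _)]
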